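/- Let S be a nonempty set, (G, ·, d) a complete metric group whose metric d is invariant under left translations (i.e., d(x·y, x·z) = d(y, z) for all x, y, z in G), and let φ : S → S and g : S → G be given functions. Let ε : S → ℝ≥0 be a function such that for every x ∈ S the series Σ_{n=0}^∞ ε(φⁿ(x)) converges, with sum Φ(x). Then for every function f : S → G satisfying d(f(φ(x)), g(x)·f(x)) ≤ ε(x) for all x ∈ S, there exists a unique function f₀ : S → G satisfying f₀(φ(x)) = g(x)·f₀(x) for all x ∈ S and d(f(x), f₀(x)) ≤ Φ(x) for all x ∈ S. -/
import Mathlib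

private def Paux {S G : Type*} [Group G] (φ : S → S) (g : S → G) (x : S) : ℕ → G
  | 0 => 1
  | n + 1 => g (φ^[n] x) * Paux φ g x n

private theorem Paux_shift {S G : Type*} [Group G] (φ : S → S) (g : S → G) (x : S) :
    ∀ n, Paux φ g (φ x) n = Paux φ g x (n + 1) * (g x)⁻¹ := by
  intro n
  induction n with
  | zero => simp [Paux]
  | succ n ih =>
    have h : φ^[n] (φ x) = φ^[n + 1] x := (Function.iterate_succ_apply φ n x).symm
    show g (φ^[n] (φ x)) * Paux φ g (φ x) n = (g (φ^[n + 1] x) * Paux φ g x (n + 1)) * (g x)⁻¹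
    rw [h, ih, mul_assoc]

theorem stability_linear_functional_equation
    {S G : Type*} [Nonempty S] [Group G] [MetricSpace G] [CompleteSpace G]
    (hinv : ∀ x y z : G, dist (x * y) (x * z) = dist y z)
    (φ : S → S) (g : S → G) (ε : S → NNReal) (Φ : S → NNReal)
    (hΦ : ∀ x : S, HasSum (fun n : ℕ => ε (φ^[n] x)) (Φ x))
    (f : S → G) (hf : ∀ x : S, dist (f (φ x)) (g x * f x) ≤ ε x) :
    ∃! f₀ : S → G, (∀ x : S, f₀ (φ x) = g x * f₀ x) ∧
      ∀ x : S, dist (f x) (f₀ x) ≤ Φ x := by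
  classical
  -- real versions of the sums
  have hΦR : ∀ x : S, HasSum (fun n : ℕ => (ε (φ^[n] x) : ℝ)) (Φ x : ℝ) := fun x =>
    NNReal.hasSum_coe.mpr (hΦ x)
  set a : S → ℕ → G := fun x n => (Paux φ g x n)⁻¹ * f (φ^[n] x) with ha
  -- left multiplication preserves limits
  have hmul : ∀ (c : G) {u : ℕ → G} {L : G}, Filter.Tendsto u Filter.atTop (nhds L) →
      Filter.Tendsto (fun n => c * u n) Filter.atTop (nhds (c * L)) := by
    intro c u L hu
    rw [tendsto_iff_dist_tendsto_zero] at hu ⊢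
    simpa [hinv] using hu
  -- step estimate
  have hstep : ∀ (x : S) (n : ℕ), dist (a x n) (a x (n + 1)) ≤ (ε (φ^[n] x) : ℝ) := by
    intro x n
    have h1 : a x (n + 1) = (Paux φ g x n)⁻¹ * (g (φ^[n] x))⁻¹ * f (φ (φ^[n] x)) := by
      simp [ha, Paux, mul_inv_rev, mul_assoc, Function.iterate_succ_apply' φ n x]
    have h2 : a x n = (Paux φ g x n)⁻¹ * (g (φ^[n] x))⁻¹ * (g (φ^[n] x) * f (φ^[n] x)) := by
      simp [ha, mul_assoc]
    rw [h1, h2, dist_comm, hinv]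
    exact hf (φ^[n] x)
  have hcauchy : ∀ x : S, CauchySeq (a x) := fun x =>
    cauchySeq_of_dist_le_of_summable _ (hstep x) (hΦR x).summable
  have hex : ∀ x : S, ∃ L, Filter.Tendsto (a x) Filter.atTop (nhds L) := fun x =>
    cauchySeq_tendsto_of_complete (hcauchy x)
  choose f₀ hf₀ using hex
  -- partial-sum bound
  have hpart : ∀ (x : S) (n : ℕ),
      dist (f x) (a x n) ≤ ∑ k ∈ Finset.range n, (ε (φ^[k] x) : ℝ) := by
    intro x n
    induction n with
    | zero => simp [ha, Paux]
    | succ n ih =>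
      calc dist (f x) (a x (n + 1)) ≤ dist (f x) (a x n) + dist (a x n) (a x (n + 1)) :=
            dist_triangle _ _ _
        _ ≤ (∑ k ∈ Finset.range n, (ε (φ^[k] x) : ℝ)) + ε (φ^[n] x) :=
            add_le_add ih (hstep x n)
        _ = ∑ k ∈ Finset.range (n + 1), (ε (φ^[k] x) : ℝ) := (Finset.sum_range_succ _ n).symm
  have hdistΦ : ∀ x : S, dist (f x) (f₀ x) ≤ (Φ x : ℝ) := by
    intro x
    have hlim : Filter.Tendsto (fun n => dist (f x) (a x n)) Filter.atTop
        (nhds (dist (f x) (f₀ x))) := (tendsto_const_nhds.dist (hf₀ x))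
    refine le_of_tendsto hlim (Filter.Eventually.of_forall fun n => ?_)
    exact (hpart x n).trans (sum_le_hasSum _ (fun i _ => (ε (φ^[i] x)).coe_nonneg) (hΦR x))
  -- shift relation
  have hshift : ∀ (x : S) (n : ℕ), a (φ x) n = g x * a x (n + 1) := by
    intro x n
    have h : φ^[n] (φ x) = φ^[n + 1] x := (Function.iterate_succ_apply φ n x).symm
    show (Paux φ g (φ x) n)⁻¹ * f (φ^[n] (φ x)) = g x * ((Paux φ g x (n + 1))⁻¹ * f (φ^[n + 1] x))
    rw [h, Paux_shift, mul_inv_rev, inv_inv, mul_assoc]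
  have heq : ∀ x : S, f₀ (φ x) = g x * f₀ x := by
    intro x
    have h1 : Filter.Tendsto (fun n => a x (n + 1)) Filter.atTop (nhds (f₀ x)) :=
      (hf₀ x).comp (Filter.tendsto_add_atTop_nat 1)
    have h2 : Filter.Tendsto (fun n => g x * a x (n + 1)) Filter.atTop (nhds (g x * f₀ x)) :=
      hmul (g x) h1
    have h3 : Filter.Tendsto (a (φ x)) Filter.atTop (nhds (g x * f₀ x)) := by
      have hfe : (fun n => g x * a x (n + 1)) = a (φ x) := funext fun n => (hshift x n).symm
      rwa [hfe] at h2
    exact tendsto_nhds_unique (hf₀ (φ x)) h3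
  refine ⟨f₀, ⟨heq, hdistΦ⟩, ?_⟩
  -- uniqueness
  rintro f₁ ⟨h1eq, h1le⟩
  funext x
  have hiter : ∀ (h : S → G), (∀ y, h (φ y) = g y * h y) →
      ∀ n, h (φ^[n] x) = Paux φ g x n * h x := by
    intro h hh n
    induction n with
    | zero => simp [Paux]
    | succ n ih =>
      rw [Function.iterate_succ_apply' φ n x, hh, ih, Paux, mul_assoc]
  have hdist_eq : ∀ n : ℕ, dist (f₁ (φ^[n] x)) (f₀ (φ^[n] x)) = dist (f₁ x) (f₀ x) := by
    intro n
    rw [hiter f₁ h1eq n, hiter f₀ heq n, hinv]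
  have hbound : ∀ n : ℕ, dist (f₁ x) (f₀ x) ≤ 2 * (Φ (φ^[n] x) : ℝ) := by
    intro n
    rw [← hdist_eq n]
    calc dist (f₁ (φ^[n] x)) (f₀ (φ^[n] x))
        ≤ dist (f₁ (φ^[n] x)) (f (φ^[n] x)) + dist (f (φ^[n] x)) (f₀ (φ^[n] x)) :=
          dist_triangle _ _ _
      _ ≤ (Φ (φ^[n] x) : ℝ) + Φ (φ^[n] x) := by
          exact add_le_add (by rw [dist_comm]; exact h1le (φ^[n] x)) (hdistΦ (φ^[n] x))
      _ = 2 * (Φ (φ^[n] x) : ℝ) := by ring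
  -- the tails tend to 0
  have htail : Filter.Tendsto (fun n => (Φ (φ^[n] x) : ℝ)) Filter.atTop (nhds 0) := by
    have hΦeq : ∀ n : ℕ, (Φ (φ^[n] x) : ℝ) = ∑' k : ℕ, ((ε (φ^[k + n] x) : ℝ)) := by
      intro n
      have := (hΦR (φ^[n] x)).tsum_eq
      rw [← this]
      refine tsum_congr fun k => ?_
      rw [Function.iterate_add_apply φ k n x]
    simp only [hΦeq]
    exact tendsto_sum_nat_add fun k => (ε (φ^[k] x) : ℝ)
  have h0 : dist (f₁ x) (f₀ x) ≤ 0 := by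
    have : Filter.Tendsto (fun n => 2 * (Φ (φ^[n] x) : ℝ)) Filter.atTop (nhds 0) := by
      simpa using htail.const_mul 2
    exact ge_of_tendsto this (Filter.Eventually.of_forall hbound)
  exact eq_of_dist_eq_zero (le_antisymm h0 dist_nonneg)
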